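/- For any points x₁, …, xₙ in a real inner product space and any c > 0, the matrix with entries exp(−c‖xᵢ − xⱼ‖²) is positive semidefinite (the Gaussian kernel is positive semidefinite). -/

import Mathlib

open scoped MatrixOrder in
open Finset in
private lemma qf_schur {n : ℕ} (A : Matrix (Fin n) (Fin n) ℝ) (hA : A.PosSemidef)
    (B : Fin n → Fin n → ℝ) (hB : ∀ v : Fin n → ℝ, 0 ≤ ∑ i, ∑ j, v i * v j * B i j)
    (v : Fin n → ℝ) : 0 ≤ ∑ i, ∑ j, v i * v j * (A i j * B i j) := by
  set S := CFC.sqrt A with hSdef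
  have hS : ∀ i j, A i j = ∑ r, S i r * S j r := by
    intro i j
    have h1 : A = S * S := (CFC.sqrt_mul_sqrt_self A hA.nonneg).symm
    have h2 : ∀ r j, S r j = S j r := by
      intro r j
      have h := (Matrix.nonneg_iff_posSemidef.mp (CFC.sqrt_nonneg A)).isHermitian
      have h2 := congrFun (congrFun h j) r
      simpa [Matrix.conjTranspose_apply] using h2
    rw [h1]
    simp only [Matrix.mul_apply]
    exact Finset.sum_congr rfl fun r _ => by rw [h2 r j]
  have key : ∀ i j, v i * v j * (A i j * B i j)
      = ∑ r, (v i * S i r) * (v j * S j r) * B i j := by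
    intro i j
    rw [hS, Finset.sum_mul, Finset.mul_sum]
    exact Finset.sum_congr rfl fun r _ => by ring
  simp_rw [key]
  have swap1 : ∀ i : Fin n, ∑ j, ∑ r, (v i * S i r) * (v j * S j r) * B i j
      = ∑ r, ∑ j, (v i * S i r) * (v j * S j r) * B i j := fun i => Finset.sum_comm
  simp_rw [swap1]
  rw [Finset.sum_comm]
  exact Finset.sum_nonneg fun r _ => hB (fun i => v i * S i r)

open Finset in
private lemma qf_gram {H : Type*} [NormedAddCommGroup H] [InnerProductSpace ℝ H]
    {n : ℕ} (x : Fin n → H) (v : Fin n → ℝ) :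
    0 ≤ ∑ i, ∑ j, v i * v j * (inner ℝ (x i) (x j) : ℝ) := by
  have : (inner ℝ (∑ i, v i • x i) (∑ j, v j • x j) : ℝ)
      = ∑ i, ∑ j, v i * v j * (inner ℝ (x i) (x j) : ℝ) := by
    rw [sum_inner]
    refine Finset.sum_congr rfl fun i _ => ?_
    rw [inner_sum]
    refine Finset.sum_congr rfl fun j _ => ?_
    rw [real_inner_smul_left, real_inner_smul_right]; ring
  rw [← this]
  exact real_inner_self_nonneg

private lemma gram_posSemidef {H : Type*} [NormedAddCommGroup H] [InnerProductSpace ℝ H]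
    {n : ℕ} (x : Fin n → H) :
    (Matrix.of fun i j => (inner ℝ (x i) (x j) : ℝ)).PosSemidef := by
  rw [Matrix.posSemidef_iff_dotProduct_mulVec]
  constructor
  · ext i j
    simp [Matrix.conjTranspose_apply, real_inner_comm]
  · intro v
    have : dotProduct (star v) (Matrix.mulVec (Matrix.of fun i j => (inner ℝ (x i) (x j) : ℝ)) v)
        = ∑ i, ∑ j, v i * v j * (inner ℝ (x i) (x j) : ℝ) := by
      simp only [dotProduct, Matrix.mulVec, star_trivial, Matrix.of_apply]
      refine Finset.sum_congr rfl fun i _ => ?_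
      rw [Finset.mul_sum]
      exact Finset.sum_congr rfl fun j _ => by ring
    rw [this]
    exact qf_gram x v

private lemma qf_gram_pow {H : Type*} [NormedAddCommGroup H] [InnerProductSpace ℝ H]
    {n : ℕ} (x : Fin n → H) (k : ℕ) (v : Fin n → ℝ) :
    0 ≤ ∑ i, ∑ j, v i * v j * (inner ℝ (x i) (x j) : ℝ) ^ k := by
  induction k generalizing v with
  | zero =>
    simp only [pow_zero, mul_one]
    have : ∑ i, ∑ j, v i * v j = (∑ i, v i) * (∑ j, v j) := by
      rw [Finset.sum_mul_sum]
    rw [this]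
    exact mul_self_nonneg _
  | succ k ih =>
    have := qf_schur (Matrix.of fun i j => (inner ℝ (x i) (x j) : ℝ)) (gram_posSemidef x)
      (fun i j => (inner ℝ (x i) (x j) : ℝ) ^ k) (fun w => ih w) v
    simpa [pow_succ, mul_comm, mul_assoc, mul_left_comm] using this

private lemma real_exp_tsum (y : ℝ) : Real.exp y = ∑' k : ℕ, y ^ k / (k.factorial : ℝ) := by
  rw [Real.exp_eq_exp_ℝ, NormedSpace.exp_eq_tsum_div]

open Finset in
private lemma qf_exp_inner {H : Type*} [NormedAddCommGroup H] [InnerProductSpace ℝ H]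
    {n : ℕ} (c : ℝ) (hc : 0 < c) (x : Fin n → H) (v : Fin n → ℝ) :
    0 ≤ ∑ i, ∑ j, v i * v j * Real.exp (2 * c * (inner ℝ (x i) (x j) : ℝ)) := by
  have expand : ∀ i j, v i * v j * Real.exp (2 * c * (inner ℝ (x i) (x j) : ℝ))
      = ∑' k : ℕ, v i * v j * ((2 * c) ^ k / (k.factorial : ℝ)) * (inner ℝ (x i) (x j) : ℝ) ^ k := by
    intro i j
    rw [real_exp_tsum, ← tsum_mul_left]
    congr 1; ext k; rw [mul_pow]; ring
  simp_rw [expand]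
  have hsummable : ∀ i j : Fin n, Summable
      (fun k : ℕ => v i * v j * ((2 * c) ^ k / (k.factorial : ℝ)) * (inner ℝ (x i) (x j) : ℝ) ^ k) := by
    intro i j
    have := Real.summable_pow_div_factorial (2 * c * (inner ℝ (x i) (x j) : ℝ))
    have := this.mul_left (v i * v j)
    refine this.congr fun k => ?_
    rw [mul_pow]; ring
  have inner_swap : ∀ i : Fin n, ∑ j, ∑' k : ℕ,
      v i * v j * ((2 * c) ^ k / (k.factorial : ℝ)) * (inner ℝ (x i) (x j) : ℝ) ^ k
      = ∑' k : ℕ, ∑ j, v i * v j * ((2 * c) ^ k / (k.factorial : ℝ))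
          * (inner ℝ (x i) (x j) : ℝ) ^ k :=
    fun i => (Summable.tsum_finsetSum (fun j _ => hsummable i j)).symm
  simp_rw [inner_swap]
  rw [← Summable.tsum_finsetSum (fun i _ => summable_sum (fun j _ => hsummable i j))]
  refine tsum_nonneg fun k => ?_
  have h1 : ∑ i, ∑ j, v i * v j * ((2 * c) ^ k / (k.factorial : ℝ))
        * (inner ℝ (x i) (x j) : ℝ) ^ k
      = ((2 * c) ^ k / (k.factorial : ℝ))
        * ∑ i, ∑ j, v i * v j * (inner ℝ (x i) (x j) : ℝ) ^ k := by
    rw [Finset.mul_sum]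
    refine Finset.sum_congr rfl fun i _ => ?_
    rw [Finset.mul_sum]
    exact Finset.sum_congr rfl fun j _ => by ring
  rw [h1]
  exact mul_nonneg (div_nonneg (pow_nonneg (by linarith) k) (Nat.cast_nonneg _))
    (qf_gram_pow x k v)

theorem stmt_13 {H : Type*} [NormedAddCommGroup H] [InnerProductSpace ℝ H]
    (c : ℝ) (hc : 0 < c) (n : ℕ) (x : Fin n → H) :
    (Matrix.of fun i j => Real.exp (-(c * ‖x i - x j‖ ^ 2))).PosSemidef := by
  rw [Matrix.posSemidef_iff_dotProduct_mulVec]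
  constructor
  · ext i j
    simp only [Matrix.conjTranspose_apply, Matrix.of_apply, star_trivial]
    rw [norm_sub_rev]
  · intro v
    have key : ∀ i j, Real.exp (-(c * ‖x i - x j‖ ^ 2))
        = Real.exp (-(c * ‖x i‖ ^ 2)) * Real.exp (2 * c * (inner ℝ (x i) (x j) : ℝ))
          * Real.exp (-(c * ‖x j‖ ^ 2)) := by
      intro i j
      rw [← Real.exp_add, ← Real.exp_add]
      congr 1
      have hns : ‖x i - x j‖ ^ 2 = ‖x i‖ ^ 2 - 2 * (inner ℝ (x i) (x j) : ℝ) + ‖x j‖ ^ 2 :=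
        norm_sub_sq_real _ _
      rw [hns]; ring
    have quad : dotProduct (star v)
        (Matrix.mulVec (Matrix.of fun i j => Real.exp (-(c * ‖x i - x j‖ ^ 2))) v)
        = ∑ i, ∑ j, (v i * Real.exp (-(c * ‖x i‖ ^ 2))) * (v j * Real.exp (-(c * ‖x j‖ ^ 2)))
            * Real.exp (2 * c * (inner ℝ (x i) (x j) : ℝ)) := by
      simp only [dotProduct, Matrix.mulVec, star_trivial, Matrix.of_apply]
      refine Finset.sum_congr rfl fun i _ => ?_
      rw [Finset.mul_sum]
      refine Finset.sum_congr rfl fun j _ => ?_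
      rw [key i j]; ring
    rw [quad]
    exact qf_exp_inner c hc x (fun i => v i * Real.exp (-(c * ‖x i‖ ^ 2)))
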